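/- Under model Y = h0(X) + (α0 + X_Jᵀβ_{0,J} + X_{J^C}ᵀβ_{0,J^C})A + ε, with U = {U_k : k ∈ J^C} the weighted projections residuals U_k = X_k - X̃_Jᵀγ_k and Γ the matrix with columns γ_k, the model can be rewritten as Y = h'0(X) + (α'0 + Uᵀβ_{0,J^C})A + ε', where h'0(X) = h0(X) + q0(X)[X̃_J - E(W^2 X̃_J)/E(W^2)]ᵀλ, α'0 = E(W^2 X̃_Jᵀ)λ/E(W^2), ε' = ε + W[X̃_J - E(W^2 X̃_J)/E(W^2)]ᵀλ, and λ = (α0, β_{0,J}ᵀ)ᵀ + Γ β_{0,J^C}. -/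

import Mathlib

open MeasureTheory Matrix

/-!
Writing `X̃_J = (1, X_J)`, the treatment coefficient `α0 + X_Jᵀβ_J + X_{Jᶜ}ᵀβ_{Jᶜ}` equals
`X̃_Jᵀλ + Uᵀβ_{Jᶜ}`, since `X_{Jᶜ}ᵀβ_{Jᶜ} = (ΓᵀX̃_J)ᵀβ_{Jᶜ} + Uᵀβ_{Jᶜ} = X̃_Jᵀ(Γβ_{Jᶜ}) + Uᵀβ_{Jᶜ}`.
Centring `X̃_Jᵀλ` at `eᵀλ` and splitting `A = W + q0(X)` moves the centred part into the
nuisance function and the noise.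
-/

section Reparametrization

variable {R : Type*} [CommRing R]

theorem dotProduct_eq_dotProduct_transpose_mulVec_add_residual {m n : Type*} [Fintype m]
    [Fintype n] (G : Matrix m n R) (x : n → R) (z c : m → R) :
    z ⬝ᵥ c = x ⬝ᵥ (Gᵀ *ᵥ c) + (z - G *ᵥ x) ⬝ᵥ c := by
  rw [dotProduct_mulVec, vecMul_transpose, sub_dotProduct, add_sub_cancel]

theorem add_dotProduct_eq_cons_dotProduct_add_residual {d r : ℕ} (a : R) (xJ βJ : Fin d → R)
    (z c : Fin r → R) (G : Matrix (Fin r) (Fin (d + 1)) R) :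
    a + xJ ⬝ᵥ βJ + z ⬝ᵥ c =
      Fin.cons 1 xJ ⬝ᵥ (Fin.cons a βJ + Gᵀ *ᵥ c) + (z - G *ᵥ Fin.cons 1 xJ) ⬝ᵥ c := by
  have hintercept : a + xJ ⬝ᵥ βJ = (Fin.cons 1 xJ : Fin (d + 1) → R) ⬝ᵥ Fin.cons a βJ := by
    rw [← vecCons, ← vecCons, cons_dotProduct_cons, one_mul]
  rw [hintercept, dotProduct_eq_dotProduct_transpose_mulVec_add_residual G (Fin.cons 1 xJ) z c,
    dotProduct_add, add_assoc]

theorem add_mul_eq_centered_reparam {ι : Type*} [Fintype ι] {A W q : R} (hA : A = W + q)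
    (x e lam : ι → R) (h s ε : R) :
    h + (x ⬝ᵥ lam + s) * A + ε =
      (h + q * ((x - e) ⬝ᵥ lam)) + (e ⬝ᵥ lam + s) * A + (ε + W * ((x - e) ⬝ᵥ lam)) := by
  rw [sub_dotProduct]
  linear_combination (x ⬝ᵥ lam - e ⬝ᵥ lam) * hA

end Reparametrization

theorem statement8_general {Ω : Type*} [MeasurableSpace Ω] (μ : Measure Ω)
    {p d r : ℕ} (X : Ω → (Fin p → ℝ)) (A Y ε : Ω → ℝ)
    (h0 q0 : (Fin p → ℝ) → ℝ) (α0 : ℝ)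
    (J : Fin d → Fin p) (Jc : Fin r → Fin p) (βJ : Fin d → ℝ) (βC : Fin r → ℝ)
    (W : Ω → ℝ) (hWdef : ∀ ω, W ω = A ω - q0 (X ω))
    (Xt : Ω → Fin (d + 1) → ℝ)
    (hXt : ∀ ω, Xt ω = Fin.cons 1 (fun j => X ω (J j)))
    -- weighted projection coefficients γ_k and residuals U_k
    (γ : Fin r → Fin (d + 1) → ℝ)
    (U : Fin r → Ω → ℝ)
    (hU : ∀ k ω, U k ω = X ω (Jc k) - ∑ i, Xt ω i * γ k i)
    (lam : Fin (d + 1) → ℝ)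
    (hlam : ∀ i, lam i = (Fin.cons α0 βJ : Fin (d + 1) → ℝ) i + ∑ k, γ k i * βC k)
    (e : Fin (d + 1) → ℝ)
    (hmodel : ∀ᵐ ω ∂μ, Y ω =
      h0 (X ω) + (α0 + (∑ j, X ω (J j) * βJ j) + ∑ k, X ω (Jc k) * βC k) * A ω + ε ω) :
    ∀ᵐ ω ∂μ, Y ω =
      (h0 (X ω) + q0 (X ω) * ∑ i, (Xt ω i - e i) * lam i)
        + ((∑ i, e i * lam i) + ∑ k, U k ω * βC k) * A ω
        + (ε ω + W ω * ∑ i, (Xt ω i - e i) * lam i) := by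
  filter_upwards [hmodel] with ω hω
  have hlam' : lam = Fin.cons α0 βJ + (of γ)ᵀ *ᵥ βC := funext hlam
  have hU' : (fun k => U k ω) = (fun k => X ω (Jc k)) - of γ *ᵥ Xt ω :=
    funext fun k => by rw [hU, Pi.sub_apply, mulVec, dotProduct_comm]; rfl
  have hindex := add_dotProduct_eq_cons_dotProduct_add_residual α0 (fun j => X ω (J j)) βJ
    (fun k => X ω (Jc k)) βC (of γ)
  rw [← hXt, ← hlam', ← hU'] at hindex
  have hA : A ω = W ω + q0 (X ω) := eq_add_of_sub_eq (hWdef ω).symm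
  rw [hω]
  exact (congrArg (fun t => h0 (X ω) + t * A ω + ε ω) hindex).trans
    (add_mul_eq_centered_reparam hA (Xt ω) e lam _ _ _)

/-- Under the model `Y = h0(X) + (α0 + X_Jᵀβ_{0,J} + X_{Jᶜ}ᵀβ_{0,Jᶜ})A + ε`, with
`Uk = Xk - X̃_Jᵀγk` the weighted projection residuals and `Γ` the matrix with columns `γk`,
the model can be rewritten as `Y = h'0(X) + (α'0 + Uᵀβ_{0,Jᶜ})A + ε'` where
`h'0(X) = h0(X) + q0(X)[X̃_J - E(W²X̃_J)/E(W²)]ᵀλ`, `α'0 = E(W²X̃_Jᵀ)λ/E(W²)`,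
`ε' = ε + W[X̃_J - E(W²X̃_J)/E(W²)]ᵀλ`, and `λ = (α0, β_{0,J}ᵀ)ᵀ + Γ β_{0,Jᶜ}`. -/
theorem statement8 {Ω : Type*} [MeasurableSpace Ω] (μ : Measure Ω) [IsProbabilityMeasure μ]
    {p d r : ℕ} (X : Ω → (Fin p → ℝ)) (A Y ε : Ω → ℝ)
    (h0 q0 : (Fin p → ℝ) → ℝ) (α0 : ℝ)
    (J : Fin d → Fin p) (Jc : Fin r → Fin p) (βJ : Fin d → ℝ) (βC : Fin r → ℝ)
    (hA01 : ∀ ω, A ω = 0 ∨ A ω = 1)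
    (W : Ω → ℝ) (hWdef : ∀ ω, W ω = A ω - q0 (X ω))
    (hEW2 : 0 < ∫ ω, (W ω) ^ 2 ∂μ)
    (Xt : Ω → Fin (d + 1) → ℝ)
    (hXt : ∀ ω, Xt ω = Fin.cons 1 (fun j => X ω (J j)))
    -- weighted projection coefficients γ_k and residuals U_k
    (γ : Fin r → Fin (d + 1) → ℝ)
    (hγ : ∀ (k : Fin r) (γ' : Fin (d + 1) → ℝ),
      ∫ ω, (W ω * (X ω (Jc k) - ∑ i, Xt ω i * γ k i)) ^ 2 ∂μ ≤
        ∫ ω, (W ω * (X ω (Jc k) - ∑ i, Xt ω i * γ' i)) ^ 2 ∂μ)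
    (U : Fin r → Ω → ℝ)
    (hU : ∀ k ω, U k ω = X ω (Jc k) - ∑ i, Xt ω i * γ k i)
    (lam : Fin (d + 1) → ℝ)
    (hlam : ∀ i, lam i = (Fin.cons α0 βJ : Fin (d + 1) → ℝ) i + ∑ k, γ k i * βC k)
    (e : Fin (d + 1) → ℝ)
    (he : ∀ i, e i = (∫ ω, (W ω) ^ 2 * Xt ω i ∂μ) / ∫ ω, (W ω) ^ 2 ∂μ)
    (hmodel : ∀ᵐ ω ∂μ, Y ω =
      h0 (X ω) + (α0 + (∑ j, X ω (J j) * βJ j) + ∑ k, X ω (Jc k) * βC k) * A ω + ε ω) :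
    ∀ᵐ ω ∂μ, Y ω =
      (h0 (X ω) + q0 (X ω) * ∑ i, (Xt ω i - e i) * lam i)
        + ((∑ i, e i * lam i) + ∑ k, U k ω * βC k) * A ω
        + (ε ω + W ω * ∑ i, (Xt ω i - e i) * lam i) :=
  statement8_general μ X A Y ε h0 q0 α0 J Jc βJ βC W hWdef Xt hXt γ U hU lam hlam e hmodel
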